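/- Let (X,μ) be a measure space with μ(X) = 1 and let u : X → ℝ be measurable. Let 0 < q < 4, set j = 4/q > 1, and let K > 0. Suppose that for every real w ≥ 0 one has ‖u‖_{L^{4(1+w)}}^{1+w} ≤ (1+w) · K · ‖u‖_{L^{qw}}^{w} (where for w = 0 the factor ‖u‖_{L^{qw}}^{w} is interpreted as 1). Then for every 0 < m < ∞, with α ∈ (0,1] defined by 1/α = 1 + m(j−1)/4, there is a constant C depending only on q and m such that ‖u‖_{L^∞} ≤ C · K^α · ‖u‖_{L^m}^{1−α}. (This is the Moser-iteration core of the paper's Theorem 8.1, abstracted over a unit-volume measure space.) -/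

import Mathlib

/-! Moser iteration. Put `j = 4 / q`, `V₀ = 1 + m / q` and `Vₙ₊₁ = 1 + j Vₙ`. The hypothesis at
`w = j Vₙ` (where `q w = 4 Vₙ` and `1 + w = Vₙ₊₁`) gives `aₙ₊₁ ≤ Vₙ₊₁ K aₙ ^ j` for
`aₙ = ‖u‖_{4Vₙ}^{Vₙ}`, and at `w = m / q` it gives `a₀ ≤ V₀ K ‖u‖_m^{m/q}`. Since `Vₙ` grows only
exponentially, unwinding the recursion gives `aₙ ≤ C^{jⁿ} K^{1 + j + ⋯ + jⁿ} ‖u‖_m^{(m/q) jⁿ}`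
with `C = C(q, m)`. As `Vₙ ~ D jⁿ`, after taking `Vₙ`-th roots the exponents of `K` and `‖u‖_m`
converge to `α` and `1 - α`, and `‖u‖_∞ ≤ liminf ‖u‖_{4Vₙ}` on any measure space. -/

open MeasureTheory ENNReal NNReal Filter Topology

theorem ENNReal.continuousAt_const_rpow {a : ℝ≥0∞} {y : ℝ} (h : a ≠ 0 ∧ a ≠ ⊤ ∨ 0 < y) :
    ContinuousAt (fun z : ℝ => a ^ z) y := by
  induction a using ENNReal.recTopCoe with
  | top =>
    have hy : 0 < y := h.resolve_left (by simp)
    refine (continuous_const (y := (⊤ : ℝ≥0∞))).continuousAt.congr ?_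
    filter_upwards [lt_mem_nhds hy] with z hz
    exact (ENNReal.top_rpow_of_pos hz).symm
  | coe x =>
    have hx : x ≠ 0 ∨ 0 < y := h.imp_left fun h => by exact_mod_cast h.1
    have hcoe : (fun z : ℝ => ((x ^ z : ℝ≥0) : ℝ≥0∞)) =ᶠ[𝓝 y] fun z => (x : ℝ≥0∞) ^ z := by
      rcases hx with hx | hy
      · exact .of_forall fun z => ENNReal.coe_rpow_of_ne_zero hx z
      · filter_upwards [lt_mem_nhds hy] with z hz
        exact ENNReal.coe_rpow_of_nonneg x hz.le
    refine ContinuousAt.congr ?_ hcoe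
    exact ENNReal.continuous_coe.continuousAt.comp
      ((NNReal.continuousAt_rpow hx).comp (continuousAt_const.prodMk continuousAt_id))

namespace MeasureTheory

variable {α ε : Type*} [MeasurableSpace α] {μ : Measure α} [TopologicalSpace ε] [ContinuousENorm ε]
  {f : α → ε}

theorem mul_meas_ge_rpow_le_eLpNorm' (hf : AEStronglyMeasurable f μ) {p : ℝ} (hp : 0 < p)
    (c : ℝ≥0∞) : c * μ {x | c ≤ ‖f x‖ₑ} ^ (1 / p) ≤ eLpNorm' f p μ := by
  have hmarkov := mul_meas_ge_le_lintegral₀ (hf.enorm.pow_const p) (c ^ p)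
  have hset : {x | c ^ p ≤ ‖f x‖ₑ ^ p} = {x | c ≤ ‖f x‖ₑ} := by
    ext x
    exact ENNReal.rpow_le_rpow_iff hp
  rw [hset] at hmarkov
  calc c * μ {x | c ≤ ‖f x‖ₑ} ^ (1 / p) = (c ^ p * μ {x | c ≤ ‖f x‖ₑ}) ^ (1 / p) := by
        rw [ENNReal.mul_rpow_of_nonneg _ _ (by positivity), ← ENNReal.rpow_mul,
          mul_one_div_cancel hp.ne', ENNReal.rpow_one]
    _ ≤ eLpNorm' f p μ := by
        rw [eLpNorm'_eq_lintegral_enorm]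
        gcongr

theorem eLpNormEssSup_le_liminf_eLpNorm' {ι : Type*} {l : Filter ι} [l.NeBot]
    (hf : AEStronglyMeasurable f μ) {p : ι → ℝ} (hp : Tendsto p l atTop) :
    eLpNormEssSup f μ ≤ liminf (fun i => eLpNorm' f (p i) μ) l := by
  refine le_of_forall_lt_imp_le_of_dense fun c hc => ?_
  set s := min (μ {x | c ≤ ‖f x‖ₑ}) 1
  have hs0 : s ≠ 0 := by
    refine ne_of_gt (lt_min (pos_iff_ne_zero.2 fun h0 => hc.not_ge ?_) one_pos)
    exact essSup_le_of_ae_le c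
      (measure_mono_null (fun x (hx : ¬ ‖f x‖ₑ ≤ c) => (not_le.1 hx).le) h0)
  have hs : Tendsto (fun i => c * s ^ (1 / p i)) l (𝓝 c) := by
    have h := (ENNReal.continuousAt_const_rpow (Or.inl ⟨hs0, (min_le_right _ _).trans_lt
      one_lt_top |>.ne⟩) (y := 0)).tendsto.comp (tendsto_inv_atTop_zero.comp hp)
    simpa only [Function.comp_def, one_div, ENNReal.rpow_zero, mul_one] using
      ENNReal.Tendsto.const_mul (a := c) h (Or.inl (by simp))
  calc c = liminf (fun i => c * s ^ (1 / p i)) l := hs.liminf_eq.symm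
    _ ≤ liminf (fun i => eLpNorm' f (p i) μ) l := by
      refine liminf_le_liminf ?_
      filter_upwards [hp.eventually_gt_atTop 0] with i hi
      calc c * s ^ (1 / p i) ≤ c * μ {x | c ≤ ‖f x‖ₑ} ^ (1 / p i) := by
            gcongr
            exact min_le_left _ _
        _ ≤ eLpNorm' f (p i) μ := mul_meas_ge_rpow_le_eLpNorm' hf hi c

end MeasureTheory

def moserPower (j w₀ : ℝ) : ℕ → ℝ
  | 0 => 1 + w₀
  | n + 1 => 1 + j * moserPower j w₀ n

section MoserPower

variable {j w₀ : ℝ}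

theorem moserPower_eq (hj : j ≠ 1) (n : ℕ) :
    moserPower j w₀ n = (1 + w₀ + (j - 1)⁻¹) * j ^ n - (j - 1)⁻¹ := by
  have hj' : j - 1 ≠ 0 := sub_ne_zero.2 hj
  induction n with
  | zero => simp [moserPower]
  | succ n ih =>
    rw [moserPower, ih, pow_succ]
    field_simp
    ring

theorem pow_le_moserPower (hj : 0 ≤ j) (hw₀ : 0 ≤ w₀) (n : ℕ) : j ^ n ≤ moserPower j w₀ n := by
  induction n with
  | zero => simp [moserPower, hw₀]
  | succ n ih =>
    rw [moserPower, pow_succ']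
    nlinarith

theorem moserPower_le_pow (hj : 0 ≤ j) (hw₀ : 0 ≤ w₀) (n : ℕ) :
    moserPower j w₀ n ≤ (1 + w₀ + j) ^ (n + 1) := by
  induction n with
  | zero => simp [moserPower, hj]
  | succ n ih =>
    have h1 : 1 ≤ (1 + w₀ + j) ^ (n + 1) := one_le_pow₀ (by linarith)
    rw [moserPower, pow_succ]
    nlinarith

theorem tendsto_moserPower_atTop (hj : 1 < j) (hw₀ : 0 ≤ w₀) :
    Tendsto (moserPower j w₀) atTop atTop :=
  tendsto_atTop_mono (pow_le_moserPower (by linarith) hw₀) (tendsto_pow_atTop_atTop_of_one_lt hj)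

theorem tendsto_affine_div_moserPower (hj : 1 < j) (hw₀ : 0 ≤ w₀) (a b : ℝ) :
    Tendsto (fun n => (a * j ^ n + b) / moserPower j w₀ n) atTop
      (𝓝 (a / (1 + w₀ + (j - 1)⁻¹))) := by
  have hD : 1 + w₀ + (j - 1)⁻¹ ≠ 0 := by
    have : 0 < (j - 1)⁻¹ := inv_pos.2 (by linarith)
    positivity
  have hx : Tendsto (fun n : ℕ => (j ^ n)⁻¹) atTop (𝓝 0) :=
    tendsto_inv_atTop_zero.comp (tendsto_pow_atTop_atTop_of_one_lt hj)
  have hlim := ((tendsto_const_nhds (x := a)).add (hx.const_mul b)).div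
    ((tendsto_const_nhds (x := 1 + w₀ + (j - 1)⁻¹)).sub (hx.const_mul (j - 1)⁻¹))
    (by simpa using hD)
  simp only [mul_zero, add_zero, sub_zero] at hlim
  refine hlim.congr fun n => ?_
  have hjn : j ^ n ≠ 0 := pow_ne_zero _ (by linarith)
  rw [Pi.div_apply, moserPower_eq hj.ne']
  field_simp

end MoserPower

theorem le_of_moser_recursion {a : ℕ → ℝ≥0∞} {G K b : ℝ≥0∞} {j : ℝ} (hj : 1 < j)
    (hG : 1 ≤ G) (hG' : G ≠ ⊤) (hK : K ≠ 0) (hK' : K ≠ ⊤) (h0 : a 0 ≤ G * K * b)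
    (hsucc : ∀ n : ℕ, a (n + 1) ≤ G ^ ((n : ℝ) + 2) * K * a n ^ j) (n : ℕ) :
    a n ≤ G ^ ((j / (j - 1)) ^ 2 * j ^ n) * K ^ ((j ^ (n + 1) - 1) / (j - 1)) * b ^ j ^ n := by
  have hG0 : G ≠ 0 := (zero_lt_one.trans_le hG).ne'
  have hj1 : j - 1 ≠ 0 := sub_ne_zero.2 hj.ne'
  set E := (j - 1)⁻¹ with hE
  have hE0 : 0 ≤ E := inv_nonneg.2 (by linarith)
  -- the exponent of `G` is the exact solution of `e (n + 1) = n + 2 + j * e n`, `e 0 = 1`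
  suffices h : a n ≤ G ^ ((j / (j - 1)) ^ 2 * j ^ n - E * (n + 2 + E)) *
      K ^ ((j ^ (n + 1) - 1) / (j - 1)) * b ^ j ^ n by
    refine h.trans ?_
    gcongr
    have : 0 ≤ E * (n + 2 + E) := by positivity
    linarith
  induction n with
  | zero =>
    have he : (j / (j - 1)) ^ 2 - E * (2 + E) = 1 := by
      rw [hE]; field_simp; ring
    simpa [he, div_self hj1] using h0
  | succ n ih =>
    have he : (n : ℝ) + 2 + ((j / (j - 1)) ^ 2 * j ^ n - E * (n + 2 + E)) * j
        = (j / (j - 1)) ^ 2 * j ^ (n + 1) - E * ((n + 1 : ℕ) + 2 + E) := by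
      rw [hE]; push_cast; field_simp; ring
    have hs : 1 + (j ^ (n + 1) - 1) / (j - 1) * j = (j ^ (n + 1 + 1) - 1) / (j - 1) := by
      field_simp; ring
    calc a (n + 1) ≤ G ^ ((n : ℝ) + 2) * K * a n ^ j := hsucc n
      _ ≤ G ^ ((n : ℝ) + 2) * K * (G ^ ((j / (j - 1)) ^ 2 * j ^ n - E * (n + 2 + E)) *
            K ^ ((j ^ (n + 1) - 1) / (j - 1)) * b ^ j ^ n) ^ j := by gcongr
      _ = G ^ ((n : ℝ) + 2) * G ^ (((j / (j - 1)) ^ 2 * j ^ n - E * (n + 2 + E)) * j) *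
            (K ^ (1 : ℝ) * K ^ ((j ^ (n + 1) - 1) / (j - 1) * j)) * b ^ (j ^ n * j) := by
        rw [ENNReal.mul_rpow_of_nonneg _ _ (by linarith),
          ENNReal.mul_rpow_of_nonneg _ _ (by linarith), ← ENNReal.rpow_mul, ← ENNReal.rpow_mul,
          ← ENNReal.rpow_mul, ENNReal.rpow_one]
        ring
      _ = _ := by
        rw [← ENNReal.rpow_add _ _ hG0 hG', ← ENNReal.rpow_add _ _ hK hK', he, hs, ← pow_succ]

/-- The hypothesis of the theorem for `N p = ‖u‖_{L^{4p}}` and `j = 4 / q`. -/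
def MoserHypothesis (N : ℝ → ℝ≥0∞) (j K : ℝ) : Prop :=
  ∀ w, 0 ≤ w → N (1 + w) ^ (1 + w) ≤ ENNReal.ofReal ((1 + w) * K) * N (w / j) ^ w

section MoserIteration

variable {N : ℝ → ℝ≥0∞} {j w₀ K : ℝ}

theorem moser_iterate_le (hj : 1 < j) (hw₀ : 0 ≤ w₀) (hK : 0 < K)
    (hN : MoserHypothesis N j K) (n : ℕ) :
    N (moserPower j w₀ n) ≤ ENNReal.ofReal (1 + w₀ + j) ^ (j / (j - 1)) ^ 2 *
      ENNReal.ofReal K ^ ((j ^ (n + 1) - 1) / (j - 1) / moserPower j w₀ n) *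
      N (w₀ / j) ^ (w₀ * j ^ n / moserPower j w₀ n) := by
  set V := moserPower j w₀
  set G := ENNReal.ofReal (1 + w₀ + j)
  have hG : 1 ≤ G := ENNReal.one_le_ofReal.2 (by linarith)
  have hpow : ∀ n, j ^ n ≤ V n := pow_le_moserPower (by linarith) hw₀
  have hV : ∀ n, 0 < V n := fun n => (pow_pos (by linarith) n).trans_le (hpow n)
  have hVG : ∀ n : ℕ, ENNReal.ofReal (V n) ≤ G ^ ((n : ℝ) + 1) := fun n => by
    rw [ENNReal.ofReal_rpow_of_nonneg (by linarith) (by positivity)]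
    exact_mod_cast ENNReal.ofReal_le_ofReal (moserPower_le_pow (by linarith) hw₀ n)
  have hiter := le_of_moser_recursion (a := fun n => N (V n) ^ V n) (b := N (w₀ / j) ^ w₀)
    hj hG ENNReal.ofReal_ne_top (ENNReal.ofReal_pos.2 hK).ne' ENNReal.ofReal_ne_top ?_ ?_ n
  · calc N (V n) = (N (V n) ^ V n) ^ (V n)⁻¹ := by
          rw [← ENNReal.rpow_mul, mul_inv_cancel₀ (hV n).ne', ENNReal.rpow_one]
      _ ≤ (G ^ ((j / (j - 1)) ^ 2 * j ^ n) * ENNReal.ofReal K ^ ((j ^ (n + 1) - 1) / (j - 1)) *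
            (N (w₀ / j) ^ w₀) ^ j ^ n) ^ (V n)⁻¹ :=
          ENNReal.rpow_le_rpow hiter (inv_nonneg.2 (hV n).le)
      _ = G ^ ((j / (j - 1)) ^ 2 * j ^ n / V n) *
            ENNReal.ofReal K ^ ((j ^ (n + 1) - 1) / (j - 1) / V n) *
            N (w₀ / j) ^ (w₀ * j ^ n / V n) := by
          simp only [div_eq_mul_inv _ (V n)]
          rw [ENNReal.mul_rpow_of_nonneg _ _ (inv_nonneg.2 (hV n).le),
            ENNReal.mul_rpow_of_nonneg _ _ (inv_nonneg.2 (hV n).le),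
            ← ENNReal.rpow_mul, ← ENNReal.rpow_mul, ← ENNReal.rpow_mul, ← ENNReal.rpow_mul,
            mul_assoc w₀]
      _ ≤ _ := by
          gcongr
          rw [div_le_iff₀ (hV n)]
          exact mul_le_mul_of_nonneg_left (hpow n) (by positivity)
  · calc N (V 0) ^ V 0 ≤ ENNReal.ofReal ((1 + w₀) * K) * N (w₀ / j) ^ w₀ := hN w₀ hw₀
      _ ≤ G * ENNReal.ofReal K * N (w₀ / j) ^ w₀ := by
          rw [ENNReal.ofReal_mul (by linarith)]
          gcongr
          exact ENNReal.ofReal_le_ofReal (by linarith)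
  · intro n
    have hjV : j * V n / j = V n := mul_div_cancel_left₀ _ (by linarith)
    calc N (V (n + 1)) ^ V (n + 1)
        ≤ ENNReal.ofReal ((1 + j * V n) * K) * N (j * V n / j) ^ (j * V n) :=
          hN _ (mul_pos (by linarith) (hV n)).le
      _ = ENNReal.ofReal (V (n + 1)) * ENNReal.ofReal K * (N (V n) ^ V n) ^ j := by
          rw [hjV, ← ENNReal.rpow_mul, mul_comm (V n) j, ← ENNReal.ofReal_mul (hV (n + 1)).le]
          rfl
      _ ≤ G ^ ((n : ℝ) + 2) * ENNReal.ofReal K * (N (V n) ^ V n) ^ j := by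
          gcongr
          exact (hVG (n + 1)).trans_eq (by push_cast; ring_nf)

theorem liminf_moser_iterate_le (hj : 1 < j) (hw₀ : 0 < w₀) (hK : 0 < K)
    (hN : MoserHypothesis N j K) :
    liminf (fun n => N (moserPower j w₀ n)) atTop ≤
      ENNReal.ofReal (1 + w₀ + j) ^ (j / (j - 1)) ^ 2 *
        ENNReal.ofReal K ^ (j / (j - 1) / (1 + w₀ + (j - 1)⁻¹)) *
        N (w₀ / j) ^ (w₀ / (1 + w₀ + (j - 1)⁻¹)) := by
  have hj1 : 0 < j - 1 := by linarith
  have hD : 0 < 1 + w₀ + (j - 1)⁻¹ := by positivity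
  have hKexp : Tendsto (fun n => (j ^ (n + 1) - 1) / (j - 1) / moserPower j w₀ n) atTop
      (𝓝 (j / (j - 1) / (1 + w₀ + (j - 1)⁻¹))) := by
    refine (tendsto_affine_div_moserPower hj hw₀.le (j / (j - 1)) (-(j - 1)⁻¹)).congr fun n => ?_
    rw [pow_succ']
    field_simp
    ring
  have hNexp : Tendsto (fun n => w₀ * j ^ n / moserPower j w₀ n) atTop
      (𝓝 (w₀ / (1 + w₀ + (j - 1)⁻¹))) := by
    simpa using tendsto_affine_div_moserPower hj hw₀.le w₀ 0
  set C := ENNReal.ofReal (1 + w₀ + j) ^ (j / (j - 1)) ^ 2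
  have hC0 : C ≠ 0 :=
    (ENNReal.rpow_pos (ENNReal.ofReal_pos.2 (by linarith)) ENNReal.ofReal_ne_top).ne'
  have hCtop : C ≠ ⊤ := ENNReal.rpow_ne_top_of_nonneg (by positivity) ENNReal.ofReal_ne_top
  have hK0 : ENNReal.ofReal K ≠ 0 := (ENNReal.ofReal_pos.2 hK).ne'
  have hKlim := (ENNReal.continuousAt_const_rpow
    (Or.inl ⟨hK0, ENNReal.ofReal_ne_top⟩)).tendsto.comp hKexp
  have hNlim := (ENNReal.continuousAt_const_rpow (a := N (w₀ / j))
    (Or.inr (by positivity))).tendsto.comp hNexp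
  have hlim := ENNReal.Tendsto.mul (ENNReal.Tendsto.const_mul (a := C) hKlim (Or.inr hCtop))
    (Or.inl (mul_ne_zero hC0 (ENNReal.rpow_pos (pos_iff_ne_zero.2 hK0) ENNReal.ofReal_ne_top).ne'))
    hNlim (Or.inr (ENNReal.mul_ne_top hCtop
      (ENNReal.rpow_ne_top_of_nonneg (by positivity) ENNReal.ofReal_ne_top)))
  exact (liminf_le_liminf (.of_forall (moser_iterate_le hj hw₀.le hK hN))).trans_eq hlim.liminf_eq

end MoserIteration

/-- Moser-iteration core of the paper's Theorem 8.1, abstracted over a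
unit-volume measure space: if `0 < q < 4`, `j = 4/q`, `K > 0`, and for all
`w ≥ 0` one has `‖u‖_{4(1+w)}^{1+w} ≤ (1+w) K ‖u‖_{qw}^w` (with the `w = 0`
factor interpreted as `1`), then for `0 < m < ∞` and `α` with
`1/α = 1 + m (j-1)/4` there is `C = C(q,m)` with
`‖u‖_∞ ≤ C K^α ‖u‖_m^{1-α}`. -/
theorem moser_iteration_core
    (q m α : ℝ) (hq0 : 0 < q) (hq4 : q < 4) (hm : 0 < m)
    (hα : 1 / α = 1 + m * (4 / q - 1) / 4) :
    ∃ C : ℝ, 0 < C ∧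
      ∀ (X : Type) (_ : MeasurableSpace X) (μ : Measure X),
        μ Set.univ = 1 →
        ∀ u : X → ℝ, Measurable u →
        ∀ K : ℝ, 0 < K →
        (∀ w : ℝ, 0 ≤ w →
          ((∫⁻ x, (ENNReal.ofReal |u x|) ^ (4 * (1 + w)) ∂μ) ^ (1 / (4 * (1 + w)))) ^ (1 + w)
            ≤ ENNReal.ofReal ((1 + w) * K) *
              ((∫⁻ x, (ENNReal.ofReal |u x|) ^ (q * w) ∂μ) ^ (1 / (q * w))) ^ w) →
        essSup (fun x => ENNReal.ofReal |u x|) μ ≤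
          ENNReal.ofReal C * (ENNReal.ofReal K) ^ α *
            ((∫⁻ x, (ENNReal.ofReal |u x|) ^ m ∂μ) ^ (1 / m)) ^ (1 - α) := by
  have hj : 1 < 4 / q := (one_lt_div hq0).2 hq4
  have hq4' : 0 < 4 - q := by linarith
  have hα' : α = 4 / q / (4 / q - 1) / (1 + m / q + (4 / q - 1)⁻¹) := by
    rw [← one_div_one_div α, hα]
    field_simp
    ring
  have h1α : 1 - α = m / q / (1 + m / q + (4 / q - 1)⁻¹) := by
    rw [hα']
    field_simp
    ring
  refine ⟨(1 + m / q + 4 / q) ^ (4 / q / (4 / q - 1)) ^ 2, by positivity, ?_⟩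
  intro X _ μ _ u hu K hK hyp
  simp only [← Real.enorm_eq_ofReal_abs, ← eLpNorm'_eq_lintegral_enorm] at hyp ⊢
  have hN : MoserHypothesis (fun p => eLpNorm' u (4 * p) μ) (4 / q) K := fun w hw => by
    simpa [show q * w = 4 * (w / (4 / q)) by field_simp] using hyp w hw
  calc eLpNormEssSup u μ
      ≤ liminf (fun n => eLpNorm' u (4 * moserPower (4 / q) (m / q) n) μ) atTop :=
        eLpNormEssSup_le_liminf_eLpNorm' hu.aestronglyMeasurable
          ((tendsto_moserPower_atTop hj (by positivity)).const_mul_atTop (by norm_num))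
    _ ≤ _ := liminf_moser_iterate_le (N := fun p => eLpNorm' u (4 * p) μ) hj (by positivity) hK hN
    _ = _ := by
      rw [ENNReal.ofReal_rpow_of_pos (by positivity), h1α, hα',
        show 4 * (m / q / (4 / q)) = m by field_simp]
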